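/- The Neumann series Σ_{k=0}^∞ Ā^k converges (in the normed algebra of n×n real matrices), and the inverse of A admits the representation A⁻¹ = D⁻¹ · Σ_{k=0}^∞ Ā^k; in particular A⁻¹ = D⁻¹ · (I − Ā)⁻¹. -/

import Mathlib

open Matrix Finset

/-!
Since `A i i ≥ 1`, the matrix `Ā = (D - A) D⁻¹` has nonnegative entries and its `j`-th column
sums to `(A j j - 1) / A j j < 1`. Hence `Āᵀ` has `L∞`-operator norm `< 1`, so the Neumann
series of `Ā` converges to `(1 - Ā)⁻¹`, and `A = (1 - Ā) D` gives `A⁻¹ = D⁻¹ (1 - Ā)⁻¹`.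
-/

theorem Matrix.hasSum_pow_of_sum_row_norm_lt_one {ι R : Type*} [Fintype ι] [DecidableEq ι]
    [NormedRing R] [CompleteSpace R] (B : Matrix ι ι R) (hB : ∀ i, ∑ j, ‖B i j‖ < 1) :
    HasSum (fun k : ℕ => B ^ k) (Ring.inverse (1 - B)) := by
  let := Matrix.linftyOpNormedRing (n := ι) (α := R)
  -- the uniformity of this norm is the product uniformity only up to unfolding
  have : @CompleteSpace (Matrix ι ι R) PseudoMetricSpace.toUniformSpace :=
    inferInstanceAs (CompleteSpace (ι → ι → R))
  have hnorm : ‖B‖ < 1 := by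
    rw [linfty_opNorm_def, ← NNReal.coe_one, NNReal.coe_lt_coe]
    refine Finset.sup_lt_iff one_pos |>.2 fun i _ => ?_
    rw [← NNReal.coe_lt_coe]
    push_cast
    exact hB i
  exact hasSum_geom_series_inverse B hnorm

theorem Matrix.hasSum_pow_of_sum_col_norm_lt_one {ι R : Type*} [Fintype ι] [DecidableEq ι]
    [NormedCommRing R] [CompleteSpace R] (B : Matrix ι ι R) (hB : ∀ j, ∑ i, ‖B i j‖ < 1) :
    HasSum (fun k : ℕ => B ^ k) (1 - B)⁻¹ := by
  simpa [transpose_pow, ← nonsing_inv_eq_ringInverse, transpose_nonsing_inv, transpose_sub] using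
    (hasSum_pow_of_sum_row_norm_lt_one Bᵀ hB).matrix_transpose

theorem Matrix.inv_diagonal_of_ne_zero {ι K : Type*} [Fintype ι] [DecidableEq ι] [Field K]
    {v : ι → K} (hv : ∀ i, v i ≠ 0) : (diagonal v)⁻¹ = diagonal v⁻¹ := by
  refine inv_eq_right_inv ?_
  rw [diagonal_mul_diagonal, ← diagonal_one]
  exact congrArg diagonal (funext fun i => mul_inv_cancel₀ (hv i))

section ColumnSumOne

variable {ι : Type*} [Fintype ι] [DecidableEq ι] {A : Matrix ι ι ℝ}

theorem one_le_diag_of_sum_col_eq_one (hoff : ∀ i j, i ≠ j → A i j ≤ 0)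
    (hdiag : ∀ i, A i i = 1 - ∑ j ∈ univ.erase i, A j i) (i : ι) : 1 ≤ A i i := by
  have : ∑ j ∈ univ.erase i, A j i ≤ 0 :=
    sum_nonpos fun j hj => hoff j i (ne_of_mem_erase hj)
  linarith [hdiag i]

theorem sum_abs_diagonal_sub_apply_of_sum_col_eq_one (hoff : ∀ i j, i ≠ j → A i j ≤ 0)
    (hdiag : ∀ i, A i i = 1 - ∑ j ∈ univ.erase i, A j i) (j : ι) :
    ∑ i, |(diagonal (fun k => A k k) - A) i j| = A j j - 1 := by
  rw [← add_sum_erase _ _ (mem_univ j), Matrix.sub_apply, diagonal_apply_eq, sub_self, abs_zero,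
    zero_add]
  have hoff_entry : ∀ i ∈ univ.erase j, |(diagonal (fun k => A k k) - A) i j| = -A i j :=
    fun i hi => by
      rw [Matrix.sub_apply, diagonal_apply_ne _ (ne_of_mem_erase hi), zero_sub,
        abs_of_nonneg (neg_nonneg.2 (hoff i j (ne_of_mem_erase hi)))]
  rw [sum_congr rfl hoff_entry, sum_neg_distrib, hdiag j]
  ring

theorem sum_norm_diagonal_sub_mul_inv_diagonal_apply_lt_one (hoff : ∀ i j, i ≠ j → A i j ≤ 0)
    (hdiag : ∀ i, A i i = 1 - ∑ j ∈ univ.erase i, A j i) (j : ι) :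
    ∑ i, ‖((diagonal (fun k => A k k) - A) * (diagonal (fun k => A k k))⁻¹) i j‖ < 1 := by
  have hpos : ∀ k, 0 < A k k := fun k =>
    one_pos.trans_le (one_le_diag_of_sum_col_eq_one hoff hdiag k)
  rw [inv_diagonal_of_ne_zero fun k => (hpos k).ne']
  simp only [mul_diagonal, Pi.inv_apply, norm_mul, norm_inv, Real.norm_eq_abs,
    abs_of_pos (hpos j), ← sum_mul, sum_abs_diagonal_sub_apply_of_sum_col_eq_one hoff hdiag j]
  rw [sub_mul, mul_inv_cancel₀ (hpos j).ne', one_mul, sub_lt_self_iff, inv_pos]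
  exact hpos j

end ColumnSumOne

theorem matrix_column_stochastic_M_matrix_neumann_series_general
    (n : ℕ) (A : Matrix (Fin n) (Fin n) ℝ)
    (hoff : ∀ i j, i ≠ j → A i j ≤ 0)
    (hdiag : ∀ i, A i i = 1 - ∑ j ∈ Finset.univ.erase i, A j i)
    (D : Matrix (Fin n) (Fin n) ℝ) (hD : D = Matrix.diagonal fun i => A i i)
    (Abar : Matrix (Fin n) (Fin n) ℝ) (hAbar : Abar = (D - A) * D⁻¹) :
    Summable (fun k : ℕ => Abar ^ k) ∧
      A⁻¹ = D⁻¹ * (∑' k : ℕ, Abar ^ k) ∧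
      A⁻¹ = D⁻¹ * (1 - Abar)⁻¹ := by
  have hneumann : HasSum (fun k : ℕ => Abar ^ k) (1 - Abar)⁻¹ := by
    subst hD hAbar
    exact hasSum_pow_of_sum_col_norm_lt_one _
      (sum_norm_diagonal_sub_mul_inv_diagonal_apply_lt_one hoff hdiag)
  have hD_det : IsUnit D.det := by
    rw [hD, det_diagonal]
    refine (prod_pos fun i _ => ?_).ne'.isUnit
    exact one_pos.trans_le (one_le_diag_of_sum_col_eq_one hoff hdiag i)
  have hA : A = (1 - Abar) * D := by
    rw [hAbar, sub_mul, one_mul, mul_assoc, nonsing_inv_mul D hD_det, mul_one, sub_sub_cancel]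
  have hinv : A⁻¹ = D⁻¹ * (1 - Abar)⁻¹ := by
    rw [← Matrix.mul_inv_rev, ← hA]
  exact ⟨hneumann.summable, hneumann.tsum_eq ▸ hinv, hinv⟩

/-- Let `A` be an `n × n` real matrix (`n ≥ 1`) with nonpositive off-diagonal entries
whose diagonal entries satisfy `A i i = 1 - ∑_{j ≠ i} A j i`.  With
`D = diag(A 1 1, …, A n n)` and `Ā = (D - A) * D⁻¹`, the Neumann series `∑ₖ Āᵏ`
converges, and `A⁻¹ = D⁻¹ * ∑ₖ Āᵏ`; in particular `A⁻¹ = D⁻¹ * (I - Ā)⁻¹`. -/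
theorem matrix_column_stochastic_M_matrix_neumann_series
    (n : ℕ) (hn : 1 ≤ n) (A : Matrix (Fin n) (Fin n) ℝ)
    (hoff : ∀ i j, i ≠ j → A i j ≤ 0)
    (hdiag : ∀ i, A i i = 1 - ∑ j ∈ Finset.univ.erase i, A j i)
    (D : Matrix (Fin n) (Fin n) ℝ) (hD : D = Matrix.diagonal fun i => A i i)
    (Abar : Matrix (Fin n) (Fin n) ℝ) (hAbar : Abar = (D - A) * D⁻¹) :
    Summable (fun k : ℕ => Abar ^ k) ∧
      A⁻¹ = D⁻¹ * (∑' k : ℕ, Abar ^ k) ∧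
      A⁻¹ = D⁻¹ * (1 - Abar)⁻¹ :=
  matrix_column_stochastic_M_matrix_neumann_series_general n A hoff hdiag D hD Abar hAbar
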